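/- arXiv:2401.00821 — 4 statements merged into one kernel-verified Lean document; each statement's English description precedes it below -/
import Mathlib

section
/- Let L_1, L_2, L_3 be pairwise distinct projective lines in ℂP² all passing through a common point P, and let L_4, L_5, L_6, L_7, L_8 be pairwise distinct projective lines all passing through a common point Q, with P ≠ Q. Assume P does not lie on any of L_4,…,L_8 and Q does not lie on any of L_1, L_2, L_3 (so the two pencils meet transversally in 15 points). Then there exist a ℂ-linear automorphism g of ℂ³ and complex numbers t_1, t_2, t_3, t_4 such that the induced action of g on subspaces maps L_1, L_2, L_3, L_4, L_5, L_6, L_7, L_8 respectively to the lines {Y=0}, {Y-Z=0}, {Y-t_1ated Z=0}, {X=0}, {X-Z=0}, {X-t_2 Z=0}, {X-t_3 Z=0}, {X-t_4 Z=0}. -/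
open Submodule Module

/-- The underlying vector space `ℂ³` for the linear model of `ℂP²`. -/
abbrev Vc : Type := Fin 3 → ℂ

/-- A projective point of `ℂP²`: a 1-dimensional `ℂ`-subspace of `ℂ³`. -/
def IsProjPoint (p : Submodule ℂ Vc) : Prop := Module.finrank ℂ p = 1

/-- A projective line of `ℂP²`: a 2-dimensional `ℂ`-subspace of `ℂ³`. -/
def IsProjLine (L : Submodule ℂ Vc) : Prop := Module.finrank ℂ L = 2

/-- A line arrangement: a finite set of (pairwise distinct) projective lines. -/
def LineArrangement (A : Finset (Submodule ℂ Vc)) : Prop := ∀ L ∈ A, IsProjLine L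

/-- The multiplicity of a projective point `p` with respect to `A`:
the number of lines of `A` containing `p`. -/
noncomputable def mult (A : Finset (Submodule ℂ Vc)) (p : Submodule ℂ Vc) : ℕ :=
  Set.ncard {L : Submodule ℂ Vc | L ∈ A ∧ p ≤ L}

/-- `nPts A r` is the number of projective points of multiplicity exactly `r` w.r.t. `A`. -/
noncomputable def nPts (A : Finset (Submodule ℂ Vc)) (r : ℕ) : ℕ :=
  Set.ncard {p : Submodule ℂ Vc | IsProjPoint p ∧ mult A p = r}

/-- A multiple point of `A`: a projective point of multiplicity at least 3. -/
def IsMultPoint (A : Finset (Submodule ℂ Vc)) (p : Submodule ℂ Vc) : Prop :=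
  IsProjPoint p ∧ 3 ≤ mult A p

/-- `A` is nonreductive if every line of `A` contains at least 3 multiple points of `A`. -/
def Nonreductive (A : Finset (Submodule ℂ Vc)) : Prop :=
  ∀ L ∈ A, 3 ≤ Set.ncard {p : Submodule ℂ Vc | IsMultPoint A p ∧ p ≤ L}

/-- The projective line `{aX + bY + cZ = 0}`. -/
noncomputable def lineEq (a b c : ℂ) : Submodule ℂ Vc :=
  LinearMap.ker (a • (LinearMap.proj 0 : Vc →ₗ[ℂ] ℂ) + b • (LinearMap.proj 1 : Vc →ₗ[ℂ] ℂ)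
    + c • (LinearMap.proj 2 : Vc →ₗ[ℂ] ℂ))

/-- Lattice isomorphism of two arrangements of `n` lines. -/
def LatticeIso (n : ℕ) (A B : Finset (Submodule ℂ Vc)) : Prop :=
  ∃ L H : Fin n → Submodule ℂ Vc,
    Function.Injective L ∧ Function.Injective H ∧
    (∀ M, M ∈ A ↔ ∃ i, L i = M) ∧ (∀ M, M ∈ B ↔ ∃ i, H i = M) ∧
    ∀ S : Finset (Fin n), S.Nonempty →
      Module.finrank ℂ ↥(⨅ i ∈ S, L i) = Module.finrank ℂ ↥(⨅ i ∈ S, H i)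

/-- Projective equivalence of two arrangements. -/
def ProjEquiv (A B : Finset (Submodule ℂ Vc)) : Prop :=
  ∃ g : Vc ≃ₗ[ℂ] Vc,
    (fun M => Submodule.map (g : Vc →ₗ[ℂ] Vc) M) '' (A : Set (Submodule ℂ Vc))
      = (B : Set (Submodule ℂ Vc))


/-!
Choose generators `p` of `P`, `q` of `Q` and a nonzero `r ∈ L₀ ∩ M₀`; they form a basis of `ℂ³`.
A line through `P` misses `q`, so together with `q` it spans `ℂ³` and hence contains a vector
`t • q + r`; being two-dimensional, it is spanned by `p` and `t • q + r`. Symmetrically every `Mⱼ`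
is spanned by `q` and some `u • p + r`. Rescaling `p` and `q` makes the parameters of `L₁` and `M₁`
equal to `1`, and in coordinates with respect to the basis `(p, q, r)` the line spanned by `p` and
`t • q + r` is `{Y = t Z}`, the one spanned by `q` and `t • p + r` is `{X = t Z}`.
-/

section LinearAlgebra

variable {K V : Type*} [Field K] [AddCommGroup V] [Module K V]

theorem Submodule.span_pair_eq_of_finrank_eq_two [FiniteDimensional K V] {W : Submodule K V}
    (hW : finrank K W = 2) {x y : V} (hxy : LinearIndependent K ![x, y]) (hx : x ∈ W)
    (hy : y ∈ W) : span K {x, y} = W := by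
  refine eq_of_le_of_finrank_eq (span_le.mpr (Set.pair_subset hx hy)) ?_
  rw [hW, ← Matrix.range_cons_cons_empty, finrank_span_eq_card hxy, Fintype.card_fin]

theorem Submodule.exists_ne_zero_mem_and_mem_of_finrank_lt_add [FiniteDimensional K V]
    {W W' : Submodule K V} (h : finrank K V < finrank K W + finrank K W') :
    ∃ x ≠ 0, x ∈ W ∧ x ∈ W' := by
  by_contra! hx
  refine h.not_ge (finrank_add_finrank_le_of_disjoint (disjoint_def.mpr fun x hxW hxW' => ?_))
  by_contra hx0
  exact hx x hx0 hxW hxW'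

theorem Submodule.exists_smul_add_mem_of_finrank_add_one_eq [FiniteDimensional K V]
    {W : Submodule K V} (hW : finrank K W + 1 = finrank K V) {q : V} (hq : q ∉ W) (r : V) :
    ∃ t : K, t • q + r ∈ W := by
  have htop : W ⊔ span K {q} = ⊤ :=
    eq_top_of_finrank_eq ((finrank_sup_span_singleton hq).trans hW)
  obtain ⟨w, hw, _, hs, hsum⟩ := mem_sup.mp (htop ▸ mem_top : r ∈ W ⊔ span K {q})
  obtain ⟨a, rfl⟩ := mem_span_singleton.mp hs
  exact ⟨-a, by rwa [← hsum, neg_smul, add_comm w, neg_add_cancel_left]⟩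

theorem Module.Basis.linearIndependent_pair_smul_add {ι : Type*} (b : Basis ι K V) {i j k : ι}
    (hij : i ≠ j) (hik : i ≠ k) (hjk : j ≠ k) (t : K) :
    LinearIndependent K ![b i, t • b j + b k] := by
  refine LinearIndependent.pair_iff.mpr fun s u h => ?_
  have hrepr := congrArg b.repr h
  have hi := DFunLike.congr_fun hrepr i
  have hk := DFunLike.congr_fun hrepr k
  simp [hij, hik, hik.symm, hjk.symm] at hi hk
  exact ⟨hi, hk⟩

end LinearAlgebra

theorem finrank_Vc : finrank ℂ Vc = 3 := by simp

theorem IsProjPoint.exists_ne_zero_le_iff {P : Submodule ℂ Vc} (hP : IsProjPoint P) :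
    ∃ v ≠ 0, ∀ W : Submodule ℂ Vc, P ≤ W ↔ v ∈ W := by
  obtain ⟨v, hvP, hv0⟩ := P.exists_mem_ne_zero_of_ne_bot (by
    rintro rfl
    simp [IsProjPoint] at hP)
  refine ⟨v, hv0, fun W => ?_⟩
  rw [eq_span_singleton_of_mem_of_finrank_eq_one hP hvP hv0, span_singleton_le_iff_mem]

theorem IsProjLine.exists_ne_zero_mem_and_mem {L M : Submodule ℂ Vc} (hL : IsProjLine L)
    (hM : IsProjLine M) : ∃ x ≠ 0, x ∈ L ∧ x ∈ M :=
  exists_ne_zero_mem_and_mem_of_finrank_lt_add (by rw [hL, hM, finrank_Vc]; norm_num)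

theorem IsProjLine.exists_smul_add_mem {L : Submodule ℂ Vc} (hL : IsProjLine L) {q : Vc}
    (hq : q ∉ L) (r : Vc) : ∃ t : ℂ, t • q + r ∈ L :=
  exists_smul_add_mem_of_finrank_add_one_eq (by rw [hL, finrank_Vc]) hq r

theorem IsProjLine.eq_of_linearIndependent_pair_mem {L M : Submodule ℂ Vc} (hL : IsProjLine L)
    (hM : IsProjLine M) {x y : Vc} (hxy : LinearIndependent ℂ ![x, y]) (hxL : x ∈ L)
    (hyL : y ∈ L) (hxM : x ∈ M) (hyM : y ∈ M) : L = M :=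
  (span_pair_eq_of_finrank_eq_two hL hxy hxL hyL).symm.trans
    (span_pair_eq_of_finrank_eq_two hM hxy hxM hyM)

theorem IsProjLine.exists_ne_zero_smul_add_mem {ι : Type*} (b : Basis ι ℂ Vc) {i j k : ι}
    (hij : i ≠ j) (hik : i ≠ k) (hjk : j ≠ k) {L L' : Submodule ℂ Vc} (hL : IsProjLine L)
    (hL' : IsProjLine L') (hne : L ≠ L') (hiL : b i ∈ L) (hkL : b k ∈ L) (hiL' : b i ∈ L')
    (hjL' : b j ∉ L') : ∃ s : ℂ, s ≠ 0 ∧ s • b j + b k ∈ L' := by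
  obtain ⟨s, hs⟩ := hL'.exists_smul_add_mem hjL' (b k)
  refine ⟨s, ?_, hs⟩
  rintro rfl
  exact hne (hL.eq_of_linearIndependent_pair_mem hL'
    (b.linearIndependent_pair_smul_add hij hik hjk 0) hiL (by simpa using hkL) hiL' hs)

theorem IsProjLine.map_eq_of_linearIndependent_pair_mem (g : Vc ≃ₗ[ℂ] Vc)
    {L N : Submodule ℂ Vc} (hL : IsProjLine L) (hN : IsProjLine N) {x y : Vc}
    (hxy : LinearIndependent ℂ ![x, y]) (hx : x ∈ L) (hy : y ∈ L) (hgx : g x ∈ N)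
    (hgy : g y ∈ N) : L.map (g : Vc →ₗ[ℂ] Vc) = N := by
  refine eq_of_le_of_finrank_eq ?_ (by rw [LinearEquiv.finrank_map_eq, hL, hN])
  rw [← span_pair_eq_of_finrank_eq_two hL hxy hx hy, map_span_le]
  rintro z (rfl | rfl)
  exacts [hgx, hgy]

@[simp]
theorem mem_lineEq {a b c : ℂ} {x : Vc} : x ∈ lineEq a b c ↔ a * x 0 + b * x 1 + c * x 2 = 0 := by
  simp [lineEq]

theorem isProjLine_lineEq {a b c : ℂ} (h : a ≠ 0 ∨ b ≠ 0 ∨ c ≠ 0) :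
    IsProjLine (lineEq a b c) := by
  have hf : a • (LinearMap.proj 0 : Vc →ₗ[ℂ] ℂ) + b • (LinearMap.proj 1 : Vc →ₗ[ℂ] ℂ)
      + c • (LinearMap.proj 2 : Vc →ₗ[ℂ] ℂ) ≠ 0 := by
    intro hf
    have h0 := LinearMap.congr_fun hf (Pi.single 0 1)
    have h1 := LinearMap.congr_fun hf (Pi.single 1 1)
    have h2 := LinearMap.congr_fun hf (Pi.single 2 1)
    simp at h0 h1 h2
    tauto
  have := Module.Dual.finrank_ker_add_one_of_ne_zero hf
  rw [finrank_Vc] at this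
  exact Nat.succ_injective this

theorem Module.Basis.map_equivFun_eq_lineEq_zero_one (b : Basis (Fin 3) ℂ Vc) {L : Submodule ℂ Vc}
    (hL : IsProjLine L) {t : ℂ} (h0 : b 0 ∈ L) (h : t • b 1 + b 2 ∈ L) :
    L.map (b.equivFun : Vc →ₗ[ℂ] Vc) = lineEq 0 1 (-t) :=
  hL.map_eq_of_linearIndependent_pair_mem b.equivFun (isProjLine_lineEq (by simp))
    (b.linearIndependent_pair_smul_add (by decide) (by decide) (by decide) t) h0 h
    (by simp) (by simp)

theorem Module.Basis.map_equivFun_eq_lineEq_one_zero (b : Basis (Fin 3) ℂ Vc) {M : Submodule ℂ Vc}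
    (hM : IsProjLine M) {t : ℂ} (h1 : b 1 ∈ M) (h : t • b 0 + b 2 ∈ M) :
    M.map (b.equivFun : Vc →ₗ[ℂ] Vc) = lineEq 1 0 (-t) :=
  hM.map_eq_of_linearIndependent_pair_mem b.equivFun (isProjLine_lineEq (by simp))
    (b.linearIndependent_pair_smul_add (by decide) (by decide) (by decide) t) h1 h
    (by simp) (by simp)

theorem exists_basis_adapted_to_pencils {P Q : Submodule ℂ Vc} (hP : IsProjPoint P)
    (hQ : IsProjPoint Q) {m n : ℕ} {L : Fin (m + 2) → Submodule ℂ Vc}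
    {M : Fin (n + 2) → Submodule ℂ Vc} (hL : ∀ i, IsProjLine (L i)) (hM : ∀ j, IsProjLine (M j))
    (hL01 : L 0 ≠ L 1) (hM01 : M 0 ≠ M 1) (hPL : ∀ i, P ≤ L i) (hQM : ∀ j, Q ≤ M j)
    (hPM : ∀ j, ¬ P ≤ M j) (hQL : ∀ i, ¬ Q ≤ L i) :
    ∃ b : Basis (Fin 3) ℂ Vc, (∀ i, b 0 ∈ L i) ∧ (∀ i, b 1 ∉ L i) ∧ (∀ j, b 1 ∈ M j) ∧
      (∀ j, b 0 ∉ M j) ∧ b 2 ∈ L 0 ∧ b 2 ∈ M 0 ∧ b 1 + b 2 ∈ L 1 ∧ b 0 + b 2 ∈ M 1 := by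
  obtain ⟨p, -, hp⟩ := hP.exists_ne_zero_le_iff
  obtain ⟨q, -, hq⟩ := hQ.exists_ne_zero_le_iff
  obtain ⟨r, hr0, hrL, hrM⟩ := (hL 0).exists_ne_zero_mem_and_mem (hM 0)
  have hpL i : p ∈ L i := (hp _).mp (hPL i)
  have hqM j : q ∈ M j := (hq _).mp (hQM j)
  have hpM j : p ∉ M j := fun h => hPM j ((hp _).mpr h)
  have hqL i : q ∉ L i := fun h => hQL i ((hq _).mpr h)
  have hqr : LinearIndependent ℂ ![q, r] := linearIndependent_fin2.mpr
    ⟨hr0, fun a h => hqL 0 (by rw [← show a • r = q from h]; exact (L 0).smul_mem a hrL)⟩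
  have hpqr : LinearIndependent ℂ ![p, q, r] := linearIndependent_finCons.mpr
    ⟨hqr, fun h => hpM 0 (span_le.mpr (by simp [Set.insert_subset_iff, hqM 0, hrM]) h)⟩
  set b₀ := basisOfLinearIndependentOfCardEqFinrank hpqr (by simp)
  have hb₀ : ⇑b₀ = ![p, q, r] := coe_basisOfLinearIndependentOfCardEqFinrank hpqr _
  obtain ⟨s, hs0, hs⟩ := (hL 0).exists_ne_zero_smul_add_mem b₀ (i := 0) (j := 1) (k := 2)
    (by decide) (by decide) (by decide) (hL 1) hL01 (by simpa [hb₀] using hpL 0)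
    (by simpa [hb₀] using hrL) (by simpa [hb₀] using hpL 1) (by simpa [hb₀] using hqL 1)
  obtain ⟨u, hu0, hu⟩ := (hM 0).exists_ne_zero_smul_add_mem b₀ (i := 1) (j := 0) (k := 2)
    (by decide) (by decide) (by decide) (hM 1) hM01 (by simpa [hb₀] using hqM 0)
    (by simpa [hb₀] using hrM) (by simpa [hb₀] using hqM 1) (by simpa [hb₀] using hpM 1)
  refine ⟨b₀.unitsSMul ![Units.mk0 u hu0, Units.mk0 s hs0, 1], ?_⟩
  simp only [hb₀, Matrix.cons_val_one, Matrix.cons_val_zero, Matrix.cons_val] at hs hu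
  simp [Basis.unitsSMul_apply, hb₀, Units.smul_mk0, smul_mem_iff _ hs0, smul_mem_iff _ hu0,
    hpL, hqL, hqM, hpM, hrL, hrM, hs, hu]

theorem pencil_normalization_general (P Q : Submodule ℂ Vc) (hP : IsProjPoint P) (hQ : IsProjPoint Q)
    (L : Fin 3 → Submodule ℂ Vc) (M : Fin 5 → Submodule ℂ Vc)
    (hL : ∀ i, IsProjLine (L i)) (hM : ∀ j, IsProjLine (M j))
    (hLinj : Function.Injective L) (hMinj : Function.Injective M)
    (hPL : ∀ i, P ≤ L i) (hQM : ∀ j, Q ≤ M j)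
    (hPM : ∀ j, ¬ P ≤ M j) (hQL : ∀ i, ¬ Q ≤ L i) :
    ∃ (g : Vc ≃ₗ[ℂ] Vc) (t1 t2 t3 t4 : ℂ),
      Submodule.map (g : Vc →ₗ[ℂ] Vc) (L 0) = lineEq 0 1 0 ∧
      Submodule.map (g : Vc →ₗ[ℂ] Vc) (L 1) = lineEq 0 1 (-1) ∧
      Submodule.map (g : Vc →ₗ[ℂ] Vc) (L 2) = lineEq 0 1 (-t1) ∧
      Submodule.map (g : Vc →ₗ[ℂ] Vc) (M 0) = lineEq 1 0 0 ∧
      Submodule.map (g : Vc →ₗ[ℂ] Vc) (M 1) = lineEq 1 0 (-1) ∧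
      Submodule.map (g : Vc →ₗ[ℂ] Vc) (M 2) = lineEq 1 0 (-t2) ∧
      Submodule.map (g : Vc →ₗ[ℂ] Vc) (M 3) = lineEq 1 0 (-t3) ∧
      Submodule.map (g : Vc →ₗ[ℂ] Vc) (M 4) = lineEq 1 0 (-t4) := by
  obtain ⟨b, hb0L, hb1L, hb1M, hb0M, hb2L, hb2M, hb12L, hb02M⟩ :=
    exists_basis_adapted_to_pencils hP hQ hL hM (hLinj.ne (by decide)) (hMinj.ne (by decide))
      hPL hQM hPM hQL
  obtain ⟨t1, ht1⟩ := (hL 2).exists_smul_add_mem (hb1L 2) (b 2)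
  obtain ⟨t2, ht2⟩ := (hM 2).exists_smul_add_mem (hb0M 2) (b 2)
  obtain ⟨t3, ht3⟩ := (hM 3).exists_smul_add_mem (hb0M 3) (b 2)
  obtain ⟨t4, ht4⟩ := (hM 4).exists_smul_add_mem (hb0M 4) (b 2)
  refine ⟨b.equivFun, t1, t2, t3, t4, ?_, ?_, ?_, ?_, ?_, ?_, ?_, ?_⟩
  · simpa using b.map_equivFun_eq_lineEq_zero_one (hL 0) (hb0L 0) (t := 0) (by simpa using hb2L)
  · exact b.map_equivFun_eq_lineEq_zero_one (hL 1) (hb0L 1) (by simpa using hb12L)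
  · exact b.map_equivFun_eq_lineEq_zero_one (hL 2) (hb0L 2) ht1
  · simpa using b.map_equivFun_eq_lineEq_one_zero (hM 0) (hb1M 0) (t := 0) (by simpa using hb2M)
  · exact b.map_equivFun_eq_lineEq_one_zero (hM 1) (hb1M 1) (by simpa using hb02M)
  · exact b.map_equivFun_eq_lineEq_one_zero (hM 2) (hb1M 2) ht2
  · exact b.map_equivFun_eq_lineEq_one_zero (hM 3) (hb1M 3) ht3
  · exact b.map_equivFun_eq_lineEq_one_zero (hM 4) (hb1M 4) ht4

/-- Two pencils of 3 and 5 lines meeting transversally can be normalized so that the lines are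
`Y=0, Y=Z, Y=t₁Z, X=0, X=Z, X=t₂Z, X=t₃Z, X=t₄Z`. -/
theorem pencil_normalization (P Q : Submodule ℂ Vc) (hP : IsProjPoint P) (hQ : IsProjPoint Q)
    (hPQ : P ≠ Q) (L : Fin 3 → Submodule ℂ Vc) (M : Fin 5 → Submodule ℂ Vc)
    (hL : ∀ i, IsProjLine (L i)) (hM : ∀ j, IsProjLine (M j))
    (hLinj : Function.Injective L) (hMinj : Function.Injective M)
    (hPL : ∀ i, P ≤ L i) (hQM : ∀ j, Q ≤ M j)
    (hPM : ∀ j, ¬ P ≤ M j) (hQL : ∀ i, ¬ Q ≤ L i) :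
    ∃ (g : Vc ≃ₗ[ℂ] Vc) (t1 t2 t3 t4 : ℂ),
      Submodule.map (g : Vc →ₗ[ℂ] Vc) (L 0) = lineEq 0 1 0 ∧
      Submodule.map (g : Vc →ₗ[ℂ] Vc) (L 1) = lineEq 0 1 (-1) ∧
      Submodule.map (g : Vc →ₗ[ℂ] Vc) (L 2) = lineEq 0 1 (-t1) ∧
      Submodule.map (g : Vc →ₗ[ℂ] Vc) (M 0) = lineEq 1 0 0 ∧
      Submodule.map (g : Vc →ₗ[ℂ] Vc) (M 1) = lineEq 1 0 (-1) ∧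
      Submodule.map (g : Vc →ₗ[ℂ] Vc) (M 2) = lineEq 1 0 (-t2) ∧
      Submodule.map (g : Vc →ₗ[ℂ] Vc) (M 3) = lineEq 1 0 (-t3) ∧
      Submodule.map (g : Vc →ₗ[ℂ] Vc) (M 4) = lineEq 1 0 (-t4) :=
  pencil_normalization_general P Q hP hQ L M hL hM hLinj hMinj hPL hQM hPM hQL
end

section
/- There is no nonreductive line arrangement of 12 pairwise distinct lines in ℂP² that has a point of multiplicity exactly 7 and no point of multiplicity at least 8 (i.e., with n_7(A) ≥ 1 and n_r(A) = 0 for all r ≥ 8). -/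
open Submodule Module

/-
A point `p` of multiplicity `m` in a nonreductive arrangement forces many multiple points that
the other lines must account for. Each of the `m` lines through `p` carries two multiple points
besides `p`, and two lines through `p` meet only in `p`, so there are at least `2m` multiple
points `q ≠ p`. Such a `q` lies on at most one line through `p` (the line `pq`), hence on at least
two of the `|A| - m` remaining lines; two distinct points share at most one line, so distinct `q`
give distinct pairs of remaining lines. Thus `2m ≤ C(|A| - m, 2)`, which fails for
`m = 7`, `|A| = 12` since `14 > C(5, 2) = 10`.
-/

lemma sup_eq_of_isProjPoint_of_isProjLine {q₁ q₂ L : Submodule ℂ Vc} (hq₁ : IsProjPoint q₁)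
    (hq₂ : IsProjPoint q₂) (hne : q₁ ≠ q₂) (hL : IsProjLine L) (h₁ : q₁ ≤ L) (h₂ : q₂ ≤ L) :
    q₁ ⊔ q₂ = L := by
  have hlt : q₁ < q₁ ⊔ q₂ := by
    refine lt_of_le_of_ne le_sup_left fun h => hne ?_
    exact (Submodule.eq_of_le_of_finrank_le (le_sup_right.trans h.ge) (by rw [hq₁, hq₂])).symm
  have hrank := Submodule.finrank_lt_finrank_of_lt hlt
  rw [hq₁] at hrank
  exact Submodule.eq_of_le_of_finrank_le (sup_le h₁ h₂) (by rw [hL]; omega)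

lemma eq_of_isProjPoint_le_of_le {q₁ q₂ L₁ L₂ : Submodule ℂ Vc} (hq₁ : IsProjPoint q₁)
    (hq₂ : IsProjPoint q₂) (hne : q₁ ≠ q₂) (hL₁ : IsProjLine L₁) (hL₂ : IsProjLine L₂)
    (h₁₁ : q₁ ≤ L₁) (h₂₁ : q₂ ≤ L₁) (h₁₂ : q₁ ≤ L₂) (h₂₂ : q₂ ≤ L₂) : L₁ = L₂ :=
  (sup_eq_of_isProjPoint_of_isProjLine hq₁ hq₂ hne hL₁ h₁₁ h₂₁).symm.trans
    (sup_eq_of_isProjPoint_of_isProjLine hq₁ hq₂ hne hL₂ h₁₂ h₂₂)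

lemma LineArrangement.filter {A : Finset (Submodule ℂ Vc)} (hA : LineArrangement A)
    (P : Submodule ℂ Vc → Prop) [DecidablePred P] : LineArrangement (A.filter P) :=
  fun L hL => hA L (Finset.mem_of_mem_filter L hL)

lemma mult_eq_card_filter (A : Finset (Submodule ℂ Vc)) (q : Submodule ℂ Vc)
    [DecidablePred (q ≤ ·)] : mult A q = (A.filter (q ≤ ·)).card := by
  rw [mult, ← Set.ncard_coe_finset]
  congr 1
  ext L
  simp

lemma exists_isProjPoint_mult_eq {A : Finset (Submodule ℂ Vc)} {r : ℕ} (h : 1 ≤ nPts A r) :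
    ∃ p, IsProjPoint p ∧ mult A p = r :=
  Set.nonempty_of_ncard_ne_zero (Nat.one_le_iff_ne_zero.mp h)

/-- Only the line `pq` passes through both `p` and `q`. -/
lemma mult_le_mult_filter_not_le_add_one {A : Finset (Submodule ℂ Vc)} (hA : LineArrangement A)
    {p q : Submodule ℂ Vc} (hp : IsProjPoint p) (hq : IsProjPoint q) (hqp : q ≠ p)
    [DecidablePred (p ≤ ·)] [DecidablePred (q ≤ ·)] :
    mult A q ≤ mult (A.filter fun L => ¬ p ≤ L) q + 1 := by
  have hthrough : ((A.filter (p ≤ ·)).filter (q ≤ ·)).card ≤ 1 := by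
    refine Finset.card_le_one.mpr fun L₁ h₁ L₂ h₂ => ?_
    simp only [Finset.mem_filter] at h₁ h₂
    exact eq_of_isProjPoint_le_of_le hq hp hqp (hA _ h₁.1.1) (hA _ h₂.1.1)
      h₁.2 h₁.1.2 h₂.2 h₂.1.2
  have hsplit := Finset.card_filter_add_card_filter_not (s := A.filter (q ≤ ·)) (p ≤ ·)
  simp only [Finset.filter_comm (q ≤ ·)] at hsplit
  rw [mult_eq_card_filter, mult_eq_card_filter]
  omega

/-- Two distinct points have no pair of lines of `B` in common, so the pairs through the
points of `S` are disjoint families of pairs of lines of `B`. -/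
lemma card_le_choose_two_of_two_le_mult {B S : Finset (Submodule ℂ Vc)}
    (hB : LineArrangement B) (hS : ∀ q ∈ S, IsProjPoint q ∧ 2 ≤ mult B q) :
    S.card ≤ B.card.choose 2 := by
  classical
  let pairs : Submodule ℂ Vc → Finset (Finset (Submodule ℂ Vc)) := fun q =>
    (B.filter (q ≤ ·)).powersetCard 2
  have hdisj : (S : Set (Submodule ℂ Vc)).PairwiseDisjoint pairs := by
    intro q₁ hq₁ q₂ hq₂ hne
    refine Finset.disjoint_left.mpr fun t ht₁ ht₂ => ?_
    simp only [pairs, Finset.mem_powersetCard, Finset.subset_iff, Finset.mem_filter] at ht₁ ht₂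
    obtain ⟨M, hM, N, hN, hMN⟩ := Finset.one_lt_card.mp (by omega : 1 < t.card)
    exact hMN (eq_of_isProjPoint_le_of_le (hS q₁ hq₁).1 (hS q₂ hq₂).1 hne
      (hB _ (ht₁.1 hM).1) (hB _ (ht₁.1 hN).1)
      (ht₁.1 hM).2 (ht₂.1 hM).2 (ht₁.1 hN).2 (ht₂.1 hN).2)
  have hne : ∀ q ∈ S, (pairs q).Nonempty := fun q hq =>
    Finset.powersetCard_nonempty.mpr ((hS q hq).2.trans (mult_eq_card_filter B q).le)
  calc S.card ≤ (S.biUnion pairs).card := Finset.card_le_card_biUnion hdisj hne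
    _ ≤ (B.powersetCard 2).card := Finset.card_le_card fun t ht => by
        obtain ⟨q, -, hq⟩ := Finset.mem_biUnion.mp ht
        exact Finset.powersetCard_mono (Finset.filter_subset _ _) hq
    _ = B.card.choose 2 := Finset.card_powersetCard 2 B

lemma Nonreductive.exists_two_isMultPoint_ne {A : Finset (Submodule ℂ Vc)}
    (hA : Nonreductive A) {L : Submodule ℂ Vc} (hL : L ∈ A) (p : Submodule ℂ Vc) :
    ∃ T : Finset (Submodule ℂ Vc), T.card = 2 ∧ ∀ q ∈ T, IsMultPoint A q ∧ q ≤ L ∧ q ≠ p := by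
  have h2 : 2 ≤ ({q | IsMultPoint A q ∧ q ≤ L} \ {p}).ncard :=
    (Nat.sub_le_sub_right (hA L hL) 1).trans (Set.pred_ncard_le_ncard_sdiff_singleton _ _)
  obtain ⟨t, hts, htcard⟩ := Set.exists_subset_card_eq h2
  have htfin : t.Finite := Set.finite_of_ncard_ne_zero (by omega)
  refine ⟨htfin.toFinset, by rw [← Set.ncard_eq_toFinset_card t htfin, htcard], fun q hq => ?_⟩
  obtain ⟨⟨hqm, hqL⟩, hqp⟩ := hts (htfin.mem_toFinset.mp hq)
  exact ⟨hqm, hqL, hqp⟩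

/-- Lines through `p` meet only in `p`, so their multiple points other than `p` are distinct. -/
lemma Nonreductive.exists_finset_isMultPoint_ne
    {A : Finset (Submodule ℂ Vc)} (hA : LineArrangement A) (hnr : Nonreductive A)
    {p : Submodule ℂ Vc} (hp : IsProjPoint p) :
    ∃ S : Finset (Submodule ℂ Vc), 2 * mult A p ≤ S.card ∧ ∀ q ∈ S, IsMultPoint A q ∧ q ≠ p := by
  classical
  let P := A.filter (p ≤ ·)
  choose T hTcard hT using fun L : P => hnr.exists_two_isMultPoint_ne (Finset.mem_filter.mp L.2).1 p
  have hdisj : (P.attach : Set P).PairwiseDisjoint T := by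
    intro L₁ _ L₂ _ hne
    refine Finset.disjoint_left.mpr fun q hq₁ hq₂ => hne (Subtype.ext ?_)
    obtain ⟨hqm, hqL₁, hqp⟩ := hT L₁ q hq₁
    obtain ⟨-, hqL₂, -⟩ := hT L₂ q hq₂
    have hL₁ := Finset.mem_filter.mp L₁.2
    have hL₂ := Finset.mem_filter.mp L₂.2
    exact eq_of_isProjPoint_le_of_le hqm.1 hp hqp (hA _ hL₁.1) (hA _ hL₂.1) hqL₁ hL₁.2 hqL₂ hL₂.2
  refine ⟨P.attach.biUnion T, ?_, fun q hq => ?_⟩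
  · rw [Finset.card_biUnion hdisj, Finset.sum_congr rfl fun L _ => hTcard L, Finset.sum_const,
      Finset.card_attach, mult_eq_card_filter, smul_eq_mul, mul_comm]
  · obtain ⟨L, -, hqL⟩ := Finset.mem_biUnion.mp hq
    exact ⟨(hT L q hqL).1, (hT L q hqL).2.2⟩

theorem Nonreductive.two_mul_mult_le_choose {A : Finset (Submodule ℂ Vc)}
    (hA : LineArrangement A) (hnr : Nonreductive A) {p : Submodule ℂ Vc} (hp : IsProjPoint p) :
    2 * mult A p ≤ (A.card - mult A p).choose 2 := by
  classical
  obtain ⟨S, hScard, hS⟩ := hnr.exists_finset_isMultPoint_ne hA hp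
  have hrest : (A.filter fun L => ¬ p ≤ L).card = A.card - mult A p := by
    rw [mult_eq_card_filter, ← Finset.card_filter_add_card_filter_not (s := A) (p ≤ ·)]
    omega
  refine hScard.trans (hrest ▸ card_le_choose_two_of_two_le_mult (hA.filter _) fun q hq => ?_)
  obtain ⟨⟨hq, hq3⟩, hqp⟩ := hS q hq
  have := mult_le_mult_filter_not_le_add_one hA hp hq hqp
  exact ⟨hq, by omega⟩

/-- There is no nonreductive arrangement of 12 lines with a point of multiplicity exactly 7
and no point of multiplicity at least 8. -/
theorem no_nonreductive_with_multiplicity_seven :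
    ¬ ∃ A : Finset (Submodule ℂ Vc), LineArrangement A ∧ A.card = 12 ∧
      Nonreductive A ∧ 1 ≤ nPts A 7 ∧ (∀ r, 8 ≤ r → nPts A r = 0) := by
  rintro ⟨A, hA, hcard, hnr, h7, -⟩
  obtain ⟨p, hp, hmult⟩ := exists_isProjPoint_mult_eq h7
  have := hnr.two_mul_mult_le_choose hA hp
  rw [hcard, hmult] at this
  norm_num [Nat.choose] at this
end

section
/- Let A be a nonreductive line arrangement of 12 pairwise distinct lines in ℂP² with at least one point of multiplicity 6 and with n_r(A) = 0 for all r ≥ 7. Then n_6(A) = 1, i.e., A has exactly one point of multiplicity 6. -/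
/-!
Two distinct points span at most one line, so if distinct points `p`, `q` satisfy
`mult p + mult q ≥ |A|`, at most one line `E` of `A` passes through neither of them. A line `M`
through `p` but not `q` (there is one as soon as `mult p ≥ 2`) then carries at most the two
multiple points `p` and `M ⊓ E`: a multiple point `x ≠ p` of `M` lies on at least three lines, at
most one through `p` and at most one through `q`, so it lies on `E`. Nonreductivity forbids this,
and `6 + 6 ≥ 12` shows that two sextic points must coincide.
-/

open Submodule Module

lemma IsProjLine.eq_sup_of_le {p q L : Submodule ℂ Vc} (hL : IsProjLine L)
    (hp : IsProjPoint p) (hq : IsProjPoint q) (hpq : p ≠ q) (hpL : p ≤ L) (hqL : q ≤ L) :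
    L = p ⊔ q := by
  have hlt : p < p ⊔ q :=
    left_lt_sup.2 fun hqp => hpq (Submodule.eq_of_le_of_finrank_eq hqp (hq.trans hp.symm)).symm
  have hrank : 2 ≤ finrank ℂ ↥(p ⊔ q) := by
    have := Submodule.finrank_lt_finrank_of_lt hlt
    rw [hp] at this
    omega
  have hle : finrank ℂ ↥(p ⊔ q) ≤ finrank ℂ L := Submodule.finrank_mono (sup_le hpL hqL)
  exact (Submodule.eq_of_le_of_finrank_eq (sup_le hpL hqL) (by rw [hL] at hle ⊢; omega)).symm

lemma IsProjLine.eq_of_le_of_le {p q L M : Submodule ℂ Vc} (hL : IsProjLine L)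
    (hM : IsProjLine M) (hp : IsProjPoint p) (hq : IsProjPoint q) (hpq : p ≠ q)
    (hpL : p ≤ L) (hqL : q ≤ L) (hpM : p ≤ M) (hqM : q ≤ M) : L = M :=
  (hL.eq_sup_of_le hp hq hpq hpL hqL).trans (hM.eq_sup_of_le hp hq hpq hpM hqM).symm

open Classical in
noncomputable def linesThrough (A : Finset (Submodule ℂ Vc)) (p : Submodule ℂ Vc) :
    Finset (Submodule ℂ Vc) :=
  A.filter (p ≤ ·)

open Classical in
noncomputable def linesAvoiding (A : Finset (Submodule ℂ Vc)) (p q : Submodule ℂ Vc) :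
    Finset (Submodule ℂ Vc) :=
  A.filter fun E => ¬p ≤ E ∧ ¬q ≤ E

section

variable {A : Finset (Submodule ℂ Vc)} {p q x M : Submodule ℂ Vc}

lemma mem_linesThrough : M ∈ linesThrough A p ↔ M ∈ A ∧ p ≤ M := by
  simp [linesThrough]

lemma mem_linesAvoiding : M ∈ linesAvoiding A p q ↔ M ∈ A ∧ ¬p ≤ M ∧ ¬q ≤ M := by
  simp [linesAvoiding]

lemma mult_eq_card_linesThrough : mult A p = (linesThrough A p).card := by
  rw [mult, ← Set.ncard_coe_finset]
  congr 1
  ext M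
  simp [mem_linesThrough]

lemma card_linesThrough_inter_le_one (hA : LineArrangement A) (hp : IsProjPoint p)
    (hq : IsProjPoint q) (hpq : p ≠ q) : (linesThrough A p ∩ linesThrough A q).card ≤ 1 := by
  refine Finset.card_le_one.2 fun L hL M hM => ?_
  simp only [Finset.mem_inter, mem_linesThrough] at hL hM
  exact (hA L hL.1.1).eq_of_le_of_le (hA M hM.1.1) hp hq hpq hL.1.2 hL.2.2 hM.1.2 hM.2.2

lemma card_linesAvoiding_add_mult_add_mult_le (hA : LineArrangement A) (hp : IsProjPoint p)
    (hq : IsProjPoint q) (hpq : p ≠ q) :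
    (linesAvoiding A p q).card + mult A p + mult A q ≤ A.card + 1 := by
  classical
  have hsplit : linesThrough A p ∪ linesThrough A q ∪ linesAvoiding A p q = A := by
    ext M
    simp only [Finset.mem_union, mem_linesThrough, mem_linesAvoiding]
    tauto
  have hdisj : Disjoint (linesThrough A p ∪ linesThrough A q) (linesAvoiding A p q) := by
    simp only [Finset.disjoint_left, Finset.mem_union, mem_linesThrough, mem_linesAvoiding]
    tauto
  have hcard := Finset.card_union_of_disjoint hdisj
  rw [hsplit] at hcard
  have := Finset.card_union_add_card_inter (linesThrough A p) (linesThrough A q)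
  have := card_linesThrough_inter_le_one hA hp hq hpq
  rw [mult_eq_card_linesThrough, mult_eq_card_linesThrough]
  omega

lemma exists_mem_linesAvoiding_of_three_le_mult (hA : LineArrangement A) (hx : IsProjPoint x)
    (hp : IsProjPoint p) (hq : IsProjPoint q) (hxp : x ≠ p) (hxq : x ≠ q)
    (hmx : 3 ≤ mult A x) : ∃ E ∈ linesAvoiding A p q, x ≤ E := by
  classical
  by_contra! hnone
  have hsub : linesThrough A x ⊆
      (linesThrough A x ∩ linesThrough A p) ∪ (linesThrough A x ∩ linesThrough A q) := by
    intro L hL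
    obtain ⟨hLA, hxL⟩ := mem_linesThrough.1 hL
    simp only [Finset.mem_union, Finset.mem_inter, mem_linesThrough]
    by_cases hpL : p ≤ L
    · exact Or.inl ⟨⟨hLA, hxL⟩, hLA, hpL⟩
    · have hqL : q ≤ L := by
        by_contra hqL
        exact hnone L (mem_linesAvoiding.2 ⟨hLA, hpL, hqL⟩) hxL
      exact Or.inr ⟨⟨hLA, hxL⟩, hLA, hqL⟩
  have := (Finset.card_le_card hsub).trans (Finset.card_union_le _ _)
  have := card_linesThrough_inter_le_one hA hx hp hxp
  have := card_linesThrough_inter_le_one hA hx hq hxq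
  rw [mult_eq_card_linesThrough] at hmx
  omega

lemma ncard_isMultPoint_le_two (hA : LineArrangement A) (hp : IsProjPoint p)
    (hq : IsProjPoint q) (hM : M ∈ A) (hpM : p ≤ M) (hqM : ¬q ≤ M)
    (havoid : (linesAvoiding A p q).card ≤ 1) :
    {x | IsMultPoint A x ∧ x ≤ M}.ncard ≤ 2 := by
  set S := {x | IsMultPoint A x ∧ x ≤ M}
  have hrest : (S \ {p}).Subsingleton := by
    rintro x ⟨⟨⟨hx, hmx⟩, hxM⟩, hxp⟩ y ⟨⟨⟨hy, hmy⟩, hyM⟩, hyp⟩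
    by_contra hxy
    have hxq : x ≠ q := fun h => hqM (h ▸ hxM)
    have hyq : y ≠ q := fun h => hqM (h ▸ hyM)
    obtain ⟨E, hE, hxE⟩ := exists_mem_linesAvoiding_of_three_le_mult hA hx hp hq hxp hxq hmx
    obtain ⟨F, hF, hyF⟩ := exists_mem_linesAvoiding_of_three_le_mult hA hy hp hq hyp hyq hmy
    obtain rfl : E = F := Finset.card_le_one.1 havoid E hE F hF
    obtain ⟨hEA, hpE, -⟩ := mem_linesAvoiding.1 hE
    have hME : M = E := (hA M hM).eq_of_le_of_le (hA E hEA) hx hy hxy hxM hyM hxE hyF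
    exact hpE (hME ▸ hpM)
  calc S.ncard ≤ (insert p (S \ {p})).ncard :=
        Set.ncard_le_ncard (by simp) (hrest.finite.insert p)
    _ ≤ (S \ {p}).ncard + 1 := Set.ncard_insert_le _ _
    _ ≤ 1 + 1 := by
      gcongr
      exact (Set.ncard_le_one hrest.finite).2 fun a ha b hb => hrest ha hb

lemma add_mult_lt_card_of_nonreductive (hA : LineArrangement A) (hnr : Nonreductive A)
    (hp : IsProjPoint p) (hq : IsProjPoint q) (hpq : p ≠ q) (hmp : 2 ≤ mult A p) :
    mult A p + mult A q < A.card := by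
  by_contra! hcard
  have hcommon := card_linesThrough_inter_le_one hA hp hq hpq
  rw [mult_eq_card_linesThrough] at hmp
  obtain ⟨M, hMp, hMq⟩ := Finset.exists_mem_notMem_of_card_lt_card (hcommon.trans_lt hmp)
  obtain ⟨hMA, hpM⟩ := mem_linesThrough.1 hMp
  have hqM : ¬q ≤ M := fun h => hMq (Finset.mem_inter.2 ⟨hMp, mem_linesThrough.2 ⟨hMA, h⟩⟩)
  have := card_linesAvoiding_add_mult_add_mult_le hA hp hq hpq
  have := ncard_isMultPoint_le_two hA hp hq hMA hpM hqM (by omega)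
  have := hnr M hMA
  omega

end

theorem nonreductive_sextic_unique_general (A : Finset (Submodule ℂ Vc))
    (hA : LineArrangement A) (hcard : A.card = 12) (hnr : Nonreductive A)
    (h6 : 1 ≤ nPts A 6) :
    nPts A 6 = 1 := by
  obtain ⟨p, hp, hmp⟩ : {p | IsProjPoint p ∧ mult A p = 6}.Nonempty :=
    Set.nonempty_of_ncard_ne_zero (by rw [nPts] at h6; omega)
  have hsingle : {q | IsProjPoint q ∧ mult A q = 6} = {p} := by
    refine Set.eq_singleton_iff_unique_mem.2 ⟨⟨hp, hmp⟩, fun q ⟨hq, hmq⟩ => ?_⟩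
    by_contra hqp
    have := add_mult_lt_card_of_nonreductive hA hnr hq hp hqp (by omega)
    omega
  rw [nPts, hsingle, Set.ncard_singleton]

/-- A nonreductive arrangement of 12 lines with a sextic point and no point of multiplicity
at least 7 has exactly one sextic point. -/
theorem nonreductive_sextic_unique (A : Finset (Submodule ℂ Vc))
    (hA : LineArrangement A) (hcard : A.card = 12) (hnr : Nonreductive A)
    (h6 : 1 ≤ nPts A 6) (h7 : ∀ r, 7 ≤ r → nPts A r = 0) :
    nPts A 6 = 1 :=
  nonreductive_sextic_unique_general A hA hcard hnr h6
end

section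
/- Let A be a nonreductive line arrangement of 12 pairwise distinct lines in ℂP² with at least one point of multiplicity 6 and with n_r(A) = 0 for all r ≥ 7. Then n_5(A) = 0, i.e., A has no point of multiplicity 5. -/
open Submodule Module

/-!
Let `p` be a sextic and `q` a quintuple point. Their pencils share at most one line, so at most
two lines of `A` pass through neither. A multiple point `m ≠ p` on a line `L ∋ p` missing `q`
lies on no other line through `p` and on at most one through `q`, hence on a line avoiding both;
two such points on `L` need two different such lines. So exactly two lines `M`, `N` avoid `p`
and `q`, and the pencils share a line `e`. A multiple point of `e` other than `p`, `q` must lie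
on both `M` and `N`, so `M ∩ N ∈ e`. Now each of the five lines `L ≠ e` through `p` meets `N` in
a multiple point off `e`, hence off `M`, which therefore lies on a line `t ≠ e` through `q`.
As `t` meets `N` only once, `L ↦ t` injects five lines into four.
-/

open scoped Classical Finset

theorem Submodule.eq_inf_of_finrank_eq_one {K V : Type*} [DivisionRing K] [AddCommGroup V]
    [Module K V] [FiniteDimensional K V] {L L' p : Submodule K V} (hL : finrank K L = 2)
    (hL' : finrank K L' = 2) (hLL' : L ≠ L') (hp : finrank K p = 1) (hpL : p ≤ L ⊓ L') :
    p = L ⊓ L' := by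
  have hlt : L ⊓ L' < L :=
    inf_lt_left.mpr fun hle => hLL' (Submodule.eq_of_le_of_finrank_eq hle (hL.trans hL'.symm))
  have := Submodule.finrank_lt_finrank_of_lt hlt
  exact Submodule.eq_of_le_of_finrank_le hpL (by omega)

noncomputable def pencil (A : Finset (Submodule ℂ Vc)) (m : Submodule ℂ Vc) :
    Finset (Submodule ℂ Vc) :=
  A.filter (m ≤ ·)

noncomputable def offPencils (A : Finset (Submodule ℂ Vc)) (p q : Submodule ℂ Vc) :
    Finset (Submodule ℂ Vc) :=
  A \ (pencil A p ∪ pencil A q)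

section Pencils

variable {A : Finset (Submodule ℂ Vc)} {L m p q : Submodule ℂ Vc}

theorem mem_pencil : L ∈ pencil A m ↔ L ∈ A ∧ m ≤ L := Finset.mem_filter

theorem mem_offPencils : L ∈ offPencils A p q ↔ L ∈ A ∧ ¬ p ≤ L ∧ ¬ q ≤ L := by
  simp only [offPencils, Finset.mem_sdiff, Finset.mem_union, mem_pencil]
  tauto

theorem mult_eq_card_pencil (A : Finset (Submodule ℂ Vc)) (m : Submodule ℂ Vc) :
    mult A m = #(pencil A m) := by
  rw [mult, ← Set.ncard_coe_finset]
  congr 1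
  ext L
  simp [mem_pencil]

theorem exists_card_pencil_eq_of_nPts_ne_zero {r : ℕ} (h : nPts A r ≠ 0) :
    ∃ p, IsProjPoint p ∧ #(pencil A p) = r := by
  obtain ⟨p, hp, hpr⟩ := Set.nonempty_of_ncard_ne_zero h
  exact ⟨p, hp, (mult_eq_card_pencil A p).symm.trans hpr⟩

theorem card_offPencils_add_card_pencil_add_card_pencil (A : Finset (Submodule ℂ Vc))
    (p q : Submodule ℂ Vc) :
    #(offPencils A p q) + #(pencil A p) + #(pencil A q) = #A + #(pencil A p ∩ pencil A q) := by
  have hsub : pencil A p ∪ pencil A q ⊆ A :=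
    Finset.union_subset (Finset.filter_subset _ _) (Finset.filter_subset _ _)
  have := Finset.card_union_add_card_inter (pencil A p) (pencil A q)
  have := Finset.card_sdiff_add_card_eq_card hsub
  rw [offPencils]
  omega

theorem card_pencil_le_add (A : Finset (Submodule ℂ Vc)) (m p q : Submodule ℂ Vc) :
    #(pencil A m) ≤ #(pencil A m ∩ pencil A p) + #(pencil A m ∩ pencil A q)
      + #(pencil A m ∩ offPencils A p q) := by
  have hsub : pencil A m ⊆ (pencil A m ∩ pencil A p ∪ pencil A m ∩ pencil A q)
      ∪ pencil A m ∩ offPencils A p q := by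
    intro L hL
    simp only [Finset.mem_union, Finset.mem_inter, mem_offPencils, mem_pencil] at hL ⊢
    tauto
  grw [Finset.card_le_card hsub, Finset.card_union_le, Finset.card_union_le]

end Pencils

namespace LineArrangement

variable {A : Finset (Submodule ℂ Vc)} {L L' e m p q x : Submodule ℂ Vc}

theorem eq_of_le_inf (hA : LineArrangement A) (hL : L ∈ A) (hL' : L' ∈ A) (hLL' : L ≠ L')
    (hp : IsProjPoint p) (hq : IsProjPoint q) (hpL : p ≤ L ⊓ L') (hqL : q ≤ L ⊓ L') : p = q :=
  (Submodule.eq_inf_of_finrank_eq_one (hA L hL) (hA L' hL') hLL' hp hpL).trans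
    (Submodule.eq_inf_of_finrank_eq_one (hA L hL) (hA L' hL') hLL' hq hqL).symm

theorem card_pencil_inter_pencil_le_one (hA : LineArrangement A) (hp : IsProjPoint p)
    (hq : IsProjPoint q) (hpq : p ≠ q) : #(pencil A p ∩ pencil A q) ≤ 1 := by
  refine Finset.card_le_one.mpr fun L hL L' hL' => by_contra fun hLL' => hpq ?_
  simp only [Finset.mem_inter, mem_pencil] at hL hL'
  exact hA.eq_of_le_inf hL.1.1 hL'.1.1 hLL' hp hq (le_inf hL.1.2 hL'.1.2) (le_inf hL.2.2 hL'.2.2)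

theorem pencil_inter_offPencils_nonempty (hA : LineArrangement A) (hp : IsProjPoint p)
    (hq : IsProjPoint q) (hm : IsMultPoint A m) (hmp : m ≠ p) (hmq : m ≠ q) :
    (pencil A m ∩ offPencils A p q).Nonempty := by
  have := hA.card_pencil_inter_pencil_le_one hm.1 hp hmp
  have := hA.card_pencil_inter_pencil_le_one hm.1 hq hmq
  have := card_pencil_le_add A m p q
  have := mult_eq_card_pencil A m ▸ hm.2
  exact Finset.card_pos.mp (by omega)

theorem pencil_inter_pencil_nonempty (hA : LineArrangement A) (hp : IsProjPoint p)
    (hm : IsMultPoint A m) (hmp : m ≠ p) (hmR : #(pencil A m ∩ offPencils A p q) ≤ 1) :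
    (pencil A m ∩ pencil A q).Nonempty := by
  have := hA.card_pencil_inter_pencil_le_one hm.1 hp hmp
  have := card_pencil_le_add A m p q
  have := mult_eq_card_pencil A m ▸ hm.2
  exact Finset.card_pos.mp (by omega)

theorem offPencils_subset_pencil (hA : LineArrangement A) (hp : IsProjPoint p)
    (hq : IsProjPoint q) (he : e ∈ pencil A p ∩ pencil A q) (hx : IsMultPoint A x)
    (hxe : x ≤ e) (hxp : x ≠ p) (hxq : x ≠ q) (hR : #(offPencils A p q) ≤ 2) :
    offPencils A p q ⊆ pencil A x := by
  obtain ⟨⟨heA, hpe⟩, -, hqe⟩ : (e ∈ A ∧ p ≤ e) ∧ e ∈ A ∧ q ≤ e := by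
    simpa only [Finset.mem_inter, mem_pencil] using he
  have hsub : pencil A x ⊆ {e} ∪ pencil A x ∩ offPencils A p q := by
    intro L hL
    obtain ⟨hLA, hxL⟩ := mem_pencil.mp hL
    by_cases hLR : L ∈ offPencils A p q
    · exact Finset.mem_union_right _ (Finset.mem_inter.mpr ⟨hL, hLR⟩)
    refine Finset.mem_union_left _ (Finset.mem_singleton.mpr (by_contra fun hLe => ?_))
    by_cases hpL : p ≤ L
    · exact hxp (hA.eq_of_le_inf hLA heA hLe hx.1 hp (le_inf hxL hxe) (le_inf hpL hpe))
    · have hqL : q ≤ L := by_contra fun hqL => hLR (mem_offPencils.mpr ⟨hLA, hpL, hqL⟩)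
      exact hxq (hA.eq_of_le_inf hLA heA hLe hx.1 hq (le_inf hxL hxe) (le_inf hqL hqe))
  have hcard : 3 ≤ 1 + #(pencil A x ∩ offPencils A p q) :=
    calc 3 ≤ #(pencil A x) := mult_eq_card_pencil A x ▸ hx.2
      _ ≤ #({e} ∪ pencil A x ∩ offPencils A p q) := Finset.card_le_card hsub
      _ ≤ 1 + #(pencil A x ∩ offPencils A p q) := by
        grw [Finset.card_union_le, Finset.card_singleton]
  exact Finset.inter_eq_right.mp
    (Finset.eq_of_subset_of_card_le Finset.inter_subset_right (by omega))

end LineArrangement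

namespace Nonreductive

variable {A : Finset (Submodule ℂ Vc)} {L M N e p q : Submodule ℂ Vc}

theorem two_le_card_filter_offPencils (hnr : Nonreductive A) (hA : LineArrangement A)
    (hp : IsProjPoint p) (hq : IsProjPoint q) (hL : L ∈ pencil A p) (hqL : ¬ q ≤ L) :
    2 ≤ #((offPencils A p q).filter fun W => ∃ m, IsMultPoint A m ∧ m ≠ p ∧ m ≤ L ⊓ W) := by
  obtain ⟨hLA, hpL⟩ := mem_pencil.mp hL
  have hLmult := hnr L hLA
  obtain ⟨m₁, ⟨hm₁, hm₁L⟩, hm₁p⟩ := Set.exists_mem_notMem_of_ncard_lt_ncard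
    (t := {m | IsMultPoint A m ∧ m ≤ L}) ((Set.ncard_singleton p).trans_lt (by omega))
  obtain ⟨m₂, ⟨hm₂, hm₂L⟩, hm₂p⟩ := Set.exists_mem_notMem_of_ncard_lt_ncard
    (t := {m | IsMultPoint A m ∧ m ≤ L})
    ((Set.ncard_insert_le m₁ {p}).trans_lt (by rw [Set.ncard_singleton]; omega))
  rw [Set.mem_singleton_iff] at hm₁p
  rw [Set.mem_insert_iff, Set.mem_singleton_iff, not_or] at hm₂p
  have hoff : ∀ m, IsMultPoint A m → m ≤ L → m ≠ p →
      ∃ W ∈ offPencils A p q, m ≤ W ∧ L ≠ W := by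
    intro m hm hmL hmp
    obtain ⟨W, hW⟩ := hA.pencil_inter_offPencils_nonempty hp hq hm hmp fun h => hqL (h ▸ hmL)
    obtain ⟨hWm, hWR⟩ := Finset.mem_inter.mp hW
    exact ⟨W, hWR, (mem_pencil.mp hWm).2, fun h => (mem_offPencils.mp hWR).2.1 (h ▸ hpL)⟩
  obtain ⟨W₁, hW₁R, hm₁W₁, hLW₁⟩ := hoff m₁ hm₁ hm₁L hm₁p
  obtain ⟨W₂, hW₂R, hm₂W₂, -⟩ := hoff m₂ hm₂ hm₂L hm₂p.2
  refine Finset.one_lt_card.mpr ⟨W₁, Finset.mem_filter.mpr ⟨hW₁R, m₁, hm₁, hm₁p, le_inf hm₁L hm₁W₁⟩,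
    W₂, Finset.mem_filter.mpr ⟨hW₂R, m₂, hm₂, hm₂p.2, le_inf hm₂L hm₂W₂⟩, fun hW => hm₂p.1 ?_⟩
  subst hW
  exact hA.eq_of_le_inf hLA (mem_offPencils.mp hW₁R).1 hLW₁ hm₂.1 hm₁.1
    (le_inf hm₂L hm₂W₂) (le_inf hm₁L hm₁W₁)

theorem exists_le_inf_mem_pencil (hnr : Nonreductive A) (hA : LineArrangement A)
    (hp : IsProjPoint p) (hq : IsProjPoint q) (he : e ∈ pencil A p)
    (hR : offPencils A p q = {M, N}) (hMNe : M ⊓ N ≤ e) (hL : L ∈ pencil A p) (hLe : L ≠ e)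
    (hqL : ¬ q ≤ L) :
    ∃ m t, IsProjPoint m ∧ m ≠ p ∧ m ≤ L ⊓ N ∧ t ∈ (pencil A q).erase e ∧ m ≤ t := by
  obtain ⟨hLA, hpL⟩ := mem_pencil.mp hL
  obtain ⟨heA, hpe⟩ := mem_pencil.mp he
  have hfilter := hnr.two_le_card_filter_offPencils hA hp hq hL hqL
  rw [hR] at hfilter
  have hN : N ∈ ({M, N} : Finset _).filter
      fun W => ∃ m, IsMultPoint A m ∧ m ≠ p ∧ m ≤ L ⊓ W := by
    rw [Finset.eq_of_subset_of_card_le (Finset.filter_subset _ _)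
      (Finset.card_le_two.trans hfilter)]
    exact Finset.mem_insert_of_mem (Finset.mem_singleton_self N)
  obtain ⟨m, hm, hmp, hmLN⟩ := (Finset.mem_filter.mp hN).2
  have hme : ¬ m ≤ e := fun hme =>
    hmp (hA.eq_of_le_inf hLA heA hLe hm.1 hp (le_inf (hmLN.trans inf_le_left) hme)
      (le_inf hpL hpe))
  have hmM : ¬ m ≤ M := fun hmM => hme ((le_inf hmM (hmLN.trans inf_le_right)).trans hMNe)
  have hmR : #(pencil A m ∩ offPencils A p q) ≤ 1 := by
    refine (Finset.card_le_card fun W hW => ?_).trans (Finset.card_singleton N).le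
    obtain ⟨hWm, hWR⟩ := Finset.mem_inter.mp hW
    rw [hR, Finset.mem_insert] at hWR
    rcases hWR with rfl | hWN
    · exact absurd (mem_pencil.mp hWm).2 hmM
    · exact hWN
  obtain ⟨t, ht⟩ := hA.pencil_inter_pencil_nonempty hp hm hmp hmR
  obtain ⟨htm, htQ⟩ := Finset.mem_inter.mp ht
  have hmt := (mem_pencil.mp htm).2
  exact ⟨m, t, hm.1, hmp, hmLN, Finset.mem_erase.mpr ⟨fun h => hme (h ▸ hmt), htQ⟩, hmt⟩

theorem card_pencil_le_card_pencil (hnr : Nonreductive A) (hA : LineArrangement A)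
    (hp : IsProjPoint p) (hq : IsProjPoint q) (he : pencil A p ∩ pencil A q = {e})
    (hR : #(offPencils A p q) = 2) : #(pencil A p) ≤ #(pencil A q) := by
  have hePQ : e ∈ pencil A p ∩ pencil A q := he ▸ Finset.mem_singleton_self e
  obtain ⟨heP, heQ⟩ := Finset.mem_inter.mp hePQ
  obtain ⟨heA, hpe⟩ := mem_pencil.mp heP
  obtain ⟨M, N, hMN, hRMN⟩ := Finset.card_eq_two.mp hR
  have hMNe : M ⊓ N ≤ e := by
    obtain ⟨x, ⟨hx, hxe⟩, hxpq⟩ := Set.exists_mem_notMem_of_ncard_lt_ncard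
      (t := {x | IsMultPoint A x ∧ x ≤ e})
      ((Set.ncard_insert_le p {q}).trans_lt (by rw [Set.ncard_singleton]; have := hnr e heA; omega))
    rw [Set.mem_insert_iff, Set.mem_singleton_iff, not_or] at hxpq
    have hxR := hA.offPencils_subset_pencil hp hq hePQ hx hxe hxpq.1 hxpq.2 hR.le
    rw [hRMN, Finset.insert_subset_iff, Finset.singleton_subset_iff, mem_pencil, mem_pencil]
      at hxR
    rw [← Submodule.eq_inf_of_finrank_eq_one (hA M hxR.1.1) (hA N hxR.2.1) hMN hx.1
      (le_inf hxR.1.2 hxR.2.2)]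
    exact hxe
  have key : ∀ L ∈ (pencil A p).erase e,
      ∃ m t, IsProjPoint m ∧ m ≠ p ∧ m ≤ L ⊓ N ∧ t ∈ (pencil A q).erase e ∧ m ≤ t := by
    intro L hL
    obtain ⟨hLe, hLP⟩ := Finset.mem_erase.mp hL
    refine hnr.exists_le_inf_mem_pencil hA hp hq heP hRMN hMNe hLP hLe fun hqL => hLe ?_
    rw [← Finset.mem_singleton, ← he]
    exact Finset.mem_inter.mpr ⟨hLP, mem_pencil.mpr ⟨(mem_pencil.mp hLP).1, hqL⟩⟩
  choose! m t hm hmp hmLN ht hmt using key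
  have hinj : Set.InjOn t ((pencil A p).erase e) := by
    intro L hL L' hL' htt
    by_contra hLL'
    obtain ⟨hLA, hpL⟩ := mem_pencil.mp (Finset.mem_of_mem_erase hL)
    obtain ⟨hL'A, hpL'⟩ := mem_pencil.mp (Finset.mem_of_mem_erase hL')
    obtain ⟨htA, hqt⟩ := mem_pencil.mp (Finset.mem_of_mem_erase (ht L hL))
    obtain ⟨hNA, -, hqN⟩ := mem_offPencils.mp
      (hRMN ▸ Finset.mem_insert_of_mem (Finset.mem_singleton_self N))
    have hmm : m L = m L' := hA.eq_of_le_inf htA hNA (fun h => hqN (h ▸ hqt)) (hm L hL)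
      (hm L' hL') (le_inf (hmt L hL) ((hmLN L hL).trans inf_le_right))
      (le_inf (htt ▸ hmt L' hL') ((hmLN L' hL').trans inf_le_right))
    exact hmp L hL (hA.eq_of_le_inf hLA hL'A hLL' (hm L hL) hp
      (le_inf ((hmLN L hL).trans inf_le_left) (hmm ▸ (hmLN L' hL').trans inf_le_left))
      (le_inf hpL hpL'))
  have hle := Finset.card_le_card_of_injOn t (fun L hL => ht L hL) hinj
  rw [Finset.card_erase_of_mem heP, Finset.card_erase_of_mem heQ] at hle
  have hQ := Finset.card_pos.mpr ⟨e, heQ⟩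
  omega

end Nonreductive

theorem nonreductive_sextic_no_quintuple_general (A : Finset (Submodule ℂ Vc))
    (hA : LineArrangement A) (hcard : A.card = 12) (hnr : Nonreductive A)
    (h6 : 1 ≤ nPts A 6) :
    nPts A 5 = 0 := by
  by_contra h5
  obtain ⟨p, hp, hp6⟩ := exists_card_pencil_eq_of_nPts_ne_zero (A := A) (r := 6) (by omega)
  obtain ⟨q, hq, hq5⟩ := exists_card_pencil_eq_of_nPts_ne_zero h5
  have hpq : p ≠ q := by rintro rfl; omega
  have hcount := card_offPencils_add_card_pencil_add_card_pencil A p q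
  rcases Nat.le_one_iff_eq_zero_or_eq_one.mp (hA.card_pencil_inter_pencil_le_one hp hq hpq)
    with hdisj | hcommon
  · obtain ⟨L, hL⟩ : (pencil A p).Nonempty := Finset.card_pos.mp (by omega)
    have hqL : ¬ q ≤ L := fun hqL => Finset.card_ne_zero.mpr
      ⟨L, Finset.mem_inter.mpr ⟨hL, mem_pencil.mpr ⟨(mem_pencil.mp hL).1, hqL⟩⟩⟩ hdisj
    have hoff := (hnr.two_le_card_filter_offPencils hA hp hq hL hqL).trans
      (Finset.card_filter_le _ _)
    omega
  · obtain ⟨e, he⟩ := Finset.card_eq_one.mp hcommon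
    have hPQ := hnr.card_pencil_le_card_pencil hA hp hq he (by omega)
    omega

/-- A nonreductive arrangement of 12 lines with a sextic point and no point of multiplicity
at least 7 has no quintuple point. -/
theorem nonreductive_sextic_no_quintuple (A : Finset (Submodule ℂ Vc))
    (hA : LineArrangement A) (hcard : A.card = 12) (hnr : Nonreductive A)
    (h6 : 1 ≤ nPts A 6) (h7 : ∀ r, 7 ≤ r → nPts A r = 0) :
    nPts A 5 = 0 :=
  nonreductive_sextic_no_quintuple_general A hA hcard hnr h6
end
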